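/- Let G be holomorphic and bounded on the open disc of radius 4r > 0 in ℂ, and let q ∈ [1,∞). If λ₁,…,λ_k are pairwise distinct with |λᵢ| ≤ 3r, then there is a constant C depending only on k and q (not on r, G, or the λᵢ) such that |G[λ₁,…,λ_k]|^q ≤ C · r^{(1−k)q − 2} · ∫_{|λ| ≤ 4r} |G(λ)|^q dA(λ), where dA is the planar Lebesgue measure. -/

import Mathlib

/-- Divided differences: G[λ]=G(λ),
G[λ₁,…,λ_{k+1}]=(G[λ₁,…,λ_k]−G[λ₂,…,λ_{k+1}])/(λ₁−λ_{k+1}). -/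
noncomputable def divDiff (G : ℂ → ℂ) : List ℂ → ℂ
  | [] => 0
  | [a] => G a
  | a :: b :: l =>
      (divDiff G (a :: (b :: l).dropLast) - divDiff G (b :: l)) /
        (a - (b :: l).getLast (List.cons_ne_nil _ _))
termination_by l => l.length
decreasing_by
  · simp [List.length_dropLast]
  · simp

/-!
Cauchy's integral formula extends to divided differences: the kernels `(∏ (z - λᵢ))⁻¹` obey the
same recursion as `G[λ₁,…,λ_k]`, so `G[λ₁,…,λ_k] = (2πi)⁻¹ ∮_{|z|=s} G(z) / ∏ (z - λᵢ) dz` for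
every circle enclosing the nodes. For `7r/2 ≤ s ≤ 15r/4` each factor `|z - λᵢ|` is at least
`r/2`, so `|G[λ]|` is at most `4r (r/2)⁻ᵏ` times the mean of `|G|` on the circle, and by Jensen
`|G[λ]|^q` is at most `(4r (r/2)⁻ᵏ)^q` times the mean of `|G|^q`. Integrating against `2πs ds`
turns these circle means into the area integral of `|G|^q` over an annulus inside the disc.
-/

open MeasureTheory Metric Set Real

def nodeProd (L : List ℂ) (z : ℂ) : ℂ := (L.map (z - ·)).prod

@[simp] lemma nodeProd_nil (z : ℂ) : nodeProd [] z = 1 := rfl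

@[simp] lemma nodeProd_cons (a : ℂ) (L : List ℂ) (z : ℂ) :
    nodeProd (a :: L) z = (z - a) * nodeProd L z := rfl

@[simp] lemma nodeProd_append (L L' : List ℂ) (z : ℂ) :
    nodeProd (L ++ L') z = nodeProd L z * nodeProd L' z := by
  simp [nodeProd]

lemma continuous_nodeProd (L : List ℂ) : Continuous (nodeProd L) := by
  induction L with
  | nil => exact continuous_const
  | cons a L ih => exact (continuous_id.sub continuous_const).mul ih

lemma nodeProd_ne_zero {L : List ℂ} {z : ℂ} (hz : z ∉ L) : nodeProd L z ≠ 0 := by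
  induction L with
  | nil => exact one_ne_zero
  | cons a L ih =>
    rw [List.mem_cons, not_or] at hz
    exact mul_ne_zero (sub_ne_zero.mpr hz.1) (ih hz.2)

lemma continuousOn_inv_nodeProd {L : List ℂ} {s : Set ℂ} (h : ∀ z ∈ s, z ∉ L) :
    ContinuousOn (fun z ↦ (nodeProd L z)⁻¹) s :=
  (continuous_nodeProd L).continuousOn.inv₀ fun z hz ↦ nodeProd_ne_zero (h z hz)

lemma pow_length_le_norm_nodeProd {L : List ℂ} {z : ℂ} {δ : ℝ} (hδ : 0 ≤ δ)
    (h : ∀ w ∈ L, δ ≤ ‖z - w‖) : δ ^ L.length ≤ ‖nodeProd L z‖ := by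
  induction L with
  | nil => simp
  | cons a L ih =>
    rw [List.forall_mem_cons] at h
    rw [nodeProd_cons, norm_mul, List.length_cons, pow_succ']
    exact mul_le_mul h.1 (ih h.2) (by positivity) (norm_nonneg _)

lemma inv_nodeProd_sub_inv_nodeProd {a b z : ℂ} {m : List ℂ} (hz : z ∉ a :: (m ++ [b])) :
    (nodeProd (a :: m) z)⁻¹ - (nodeProd (m ++ [b]) z)⁻¹ =
      (a - b) * (nodeProd (a :: (m ++ [b])) z)⁻¹ := by
  simp only [List.mem_cons, List.mem_append, List.not_mem_nil, or_false, not_or] at hz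
  have ha : z - a ≠ 0 := sub_ne_zero.mpr hz.1
  have hb : z - b ≠ 0 := sub_ne_zero.mpr hz.2.2
  have hm : nodeProd m z ≠ 0 := nodeProd_ne_zero hz.2.1
  simp only [nodeProd_cons, nodeProd_append, nodeProd_nil, mul_one]
  field_simp
  ring

lemma divDiff_cons_concat (G : ℂ → ℂ) (a b : ℂ) (m : List ℂ) :
    divDiff G (a :: (m ++ [b])) = (divDiff G (a :: m) - divDiff G (m ++ [b])) / (a - b) := by
  obtain ⟨x, t, hxt⟩ := List.exists_cons_of_ne_nil (List.concat_ne_nil b m)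
  rw [hxt, divDiff]
  simp only [← hxt, List.dropLast_concat, List.getLast_concat]

section CauchyFormula

variable {G : ℂ → ℂ} {c : ℂ} {R : ℝ}

lemma circleIntegrable_inv_nodeProd_smul (hR : 0 ≤ R) (hG : DiffContOnCl ℂ G (ball c R))
    {L : List ℂ} (hLR : ∀ w ∈ L, w ∈ ball c R) :
    CircleIntegrable (fun z ↦ (nodeProd L z)⁻¹ • G z) c R := by
  have hP : ContinuousOn (fun z ↦ (nodeProd L z)⁻¹) (sphere c R) :=
    continuousOn_inv_nodeProd fun z hz hzL ↦ (hLR z hzL).ne (mem_sphere.mp hz)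
  exact ContinuousOn.circleIntegrable hR
    (hP.smul (hG.continuousOn_ball.mono sphere_subset_closedBall))

theorem divDiff_eq_circleIntegral (hR : 0 ≤ R) (hG : DiffContOnCl ℂ G (ball c R))
    {L : List ℂ} (hL : L.Nodup) (hLR : ∀ w ∈ L, w ∈ ball c R) :
    divDiff G L = (2 * π * Complex.I)⁻¹ • ∮ z in C(c, R), (nodeProd L z)⁻¹ • G z := by
  induction hn : L.length using Nat.strong_induction_on generalizing L with
  | _ n ih =>
  match L with
  | [] => simp [divDiff, hG.circleIntegral_eq_zero hR]
  | [a] =>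
    simp only [divDiff, nodeProd_cons, nodeProd_nil, mul_one]
    rw [hG.circleIntegral_sub_inv_smul (hLR a (by simp)), inv_smul_smul₀ Complex.two_pi_I_ne_zero]
  | a :: b :: l =>
    obtain ⟨m, e, hme⟩ : ∃ m e, b :: l = m ++ [e] :=
      ⟨_, _, (List.dropLast_append_getLast (List.cons_ne_nil b l)).symm⟩
    rw [hme] at hL hLR hn ⊢
    have ih_sublist : ∀ L', L'.Sublist (a :: (m ++ [e])) → L'.length < n →
        divDiff G L' = (2 * π * Complex.I)⁻¹ • ∮ z in C(c, R), (nodeProd L' z)⁻¹ • G z :=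
      fun L' hs hlt ↦ ih _ hlt (hL.sublist hs) (fun w hw ↦ hLR w (hs.subset hw)) rfl
    have hinit := List.Sublist.cons_cons a (List.sublist_append_left m [e])
    have htail := List.sublist_cons_self a (m ++ [e])
    have hae : a - e ≠ 0 := sub_ne_zero.mpr fun h ↦ (List.nodup_cons.mp hL).1 (by simp [h])
    rw [divDiff_cons_concat, ih_sublist _ hinit (by simp [← hn]),
      ih_sublist _ htail (by simp [← hn]), ← smul_sub,
      ← circleIntegral.integral_sub
        (circleIntegrable_inv_nodeProd_smul hR hG fun w hw ↦ hLR w (hinit.subset hw))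
        (circleIntegrable_inv_nodeProd_smul hR hG fun w hw ↦ hLR w (htail.subset hw)),
      div_eq_iff hae]
    have hcongr : EqOn (fun z ↦ (nodeProd (a :: m) z)⁻¹ • G z - (nodeProd (m ++ [e]) z)⁻¹ • G z)
        (fun z ↦ (a - e) • (nodeProd (a :: (m ++ [e])) z)⁻¹ • G z) (sphere c R) := by
      intro z hz
      simp only [← sub_smul, smul_smul]
      rw [inv_nodeProd_sub_inv_nodeProd fun hzL ↦ (hLR z hzL).ne (mem_sphere.mp hz)]
    rw [circleIntegral.integral_congr hR hcongr, circleIntegral.integral_smul, smul_comm,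
      smul_eq_mul, smul_eq_mul, mul_comm]

end CauchyFormula

section CircleAverage

variable {c : ℂ} {R : ℝ}

lemma norm_circleAverage_le {E : Type*} [NormedAddCommGroup E] [NormedSpace ℝ E] (f : ℂ → E) :
    ‖circleAverage f c R‖ ≤ circleAverage (fun z ↦ ‖f z‖) c R := by
  rw [circleAverage, circleAverage, norm_smul, smul_eq_mul, Real.norm_of_nonneg (by positivity)]
  gcongr
  exact intervalIntegral.norm_integral_le_integral_norm two_pi_pos.le

theorem circleAverage_rpow_le {f : ℂ → ℝ} {p : ℝ} (hp : 1 ≤ p)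
    (hf : ContinuousOn f (sphere c |R|)) (hf₀ : ∀ z ∈ sphere c |R|, 0 ≤ f z) :
    circleAverage f c R ^ p ≤ circleAverage (fun z ↦ f z ^ p) c R := by
  have hcont : Continuous fun θ ↦ f (circleMap c R θ) :=
    hf.comp_continuous (continuous_circleMap c R) (circleMap_mem_sphere' c R)
  simp only [circleAverage_eq_intervalAverage]
  refine (convexOn_rpow hp).map_set_average_le
    (continuousOn_id.rpow_const fun _ _ ↦ Or.inr (by linarith)) isClosed_Ici ?_ ?_
    (ae_of_all _ fun θ ↦ hf₀ _ (circleMap_mem_sphere' c R θ)) hcont.integrableOn_uIoc ?_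
  · simp
  · simp [ENNReal.mul_eq_top]
  · exact (hcont.rpow_const fun _ ↦ Or.inr (by linarith)).integrableOn_uIoc

end CircleAverage

section DividedDifferenceBounds

variable {G : ℂ → ℂ} {c : ℂ} {R δ : ℝ} {L : List ℂ}

theorem norm_divDiff_le_circleAverage (hR : 0 < R) (hδ : 0 < δ)
    (hG : DiffContOnCl ℂ G (ball c R)) (hL : L.Nodup) (hLR : ∀ w ∈ L, w ∈ closedBall c (R - δ)) :
    ‖divDiff G L‖ ≤ R / δ ^ L.length * circleAverage (fun z ↦ ‖G z‖) c R := by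
  have hLR' : ∀ w ∈ L, w ∈ ball c R := fun w hw ↦
    closedBall_subset_ball (by linarith) (hLR w hw)
  have hsep : ∀ z ∈ sphere c R, ∀ w ∈ L, δ ≤ ‖z - w‖ := fun z hz w hw ↦ by
    have := dist_triangle z w c
    rw [mem_sphere.mp hz, dist_comm w c] at this
    rw [← dist_eq_norm]
    linarith [mem_closedBall'.mp (hLR w hw)]
  have hGc : ContinuousOn G (sphere c R) := hG.continuousOn_ball.mono sphere_subset_closedBall
  have hPc : ContinuousOn (fun z ↦ (nodeProd L z)⁻¹) (sphere c R) :=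
    continuousOn_inv_nodeProd fun z hz hzL ↦ (hLR' z hzL).ne (mem_sphere.mp hz)
  have havg : divDiff G L = circleAverage (fun z ↦ (z - c) • (nodeProd L z)⁻¹ • G z) c R := by
    rw [circleAverage_eq_circleIntegral hR.ne', divDiff_eq_circleIntegral hR.le hG hL hLR']
    congr 1
    refine circleIntegral.integral_congr hR.le fun z hz ↦ ?_
    simp only [smul_smul]
    rw [← mul_assoc, inv_mul_cancel₀ (sub_ne_zero.mpr (ne_of_mem_sphere hz hR.ne')), one_mul]
  calc ‖divDiff G L‖
      ≤ circleAverage (fun z ↦ ‖(z - c) • (nodeProd L z)⁻¹ • G z‖) c R :=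
        havg ▸ norm_circleAverage_le _
    _ ≤ circleAverage (fun z ↦ R / δ ^ L.length * ‖G z‖) c R := by
        refine circleAverage_mono ?_ ?_ fun z hz ↦ ?_
        · refine ContinuousOn.circleIntegrable hR.le ?_
          exact ((continuousOn_id.sub continuousOn_const).smul (hPc.smul hGc)).norm
        · exact ContinuousOn.circleIntegrable hR.le (continuousOn_const.mul hGc.norm)
        · rw [abs_of_pos hR] at hz
          rw [norm_smul, norm_smul, norm_inv, ← dist_eq_norm, mem_sphere.mp hz, ← mul_assoc,
            div_eq_mul_inv]
          gcongr
          exact pow_length_le_norm_nodeProd hδ.le (hsep z hz)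
    _ = R / δ ^ L.length * circleAverage (fun z ↦ ‖G z‖) c R :=
        circleAverage_fun_smul (a := R / δ ^ L.length) (f := fun z ↦ ‖G z‖)

theorem norm_divDiff_rpow_le_circleAverage {p : ℝ} (hp : 1 ≤ p) (hR : 0 < R) (hδ : 0 < δ)
    (hG : DiffContOnCl ℂ G (ball c R)) (hL : L.Nodup) (hLR : ∀ w ∈ L, w ∈ closedBall c (R - δ)) :
    ‖divDiff G L‖ ^ p ≤ (R / δ ^ L.length) ^ p * circleAverage (fun z ↦ ‖G z‖ ^ p) c R := by
  have hGc : ContinuousOn G (sphere c |R|) := by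
    rw [abs_of_pos hR]
    exact hG.continuousOn_ball.mono sphere_subset_closedBall
  have hnorm₀ : ∀ z ∈ sphere c |R|, 0 ≤ ‖G z‖ := fun _ _ ↦ norm_nonneg _
  calc ‖divDiff G L‖ ^ p
      ≤ (R / δ ^ L.length * circleAverage (fun z ↦ ‖G z‖) c R) ^ p := by
        gcongr
        exact norm_divDiff_le_circleAverage hR hδ hG hL hLR
    _ = (R / δ ^ L.length) ^ p * circleAverage (fun z ↦ ‖G z‖) c R ^ p :=
        mul_rpow (by positivity) (circleAverage_nonneg_of_nonneg hnorm₀)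
    _ ≤ (R / δ ^ L.length) ^ p * circleAverage (fun z ↦ ‖G z‖ ^ p) c R := by
        gcongr
        exact circleAverage_rpow_le hp hGc.norm hnorm₀

end DividedDifferenceBounds

section Annulus

variable {E : Type*} [NormedAddCommGroup E] [NormedSpace ℝ E]

lemma integral_Ioo_circleMap_eq_circleAverage (f : ℂ → E) (c : ℂ) (R : ℝ) :
    ∫ θ in Ioo (-π) π, f (circleMap c R θ) = (2 * π) • circleAverage f c R := by
  have hper : Function.Periodic (fun θ ↦ f (circleMap c R θ)) (2 * π) := fun θ ↦ by
    simp only [periodic_circleMap c R θ]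
  have := hper.intervalIntegral_add_eq (-π) 0
  rw [circleAverage, smul_inv_smul₀ two_pi_pos.ne', ← integral_Ioc_eq_integral_Ioo,
    ← intervalIntegral.integral_of_le (by linarith [pi_pos])]
  convert this using 2 <;> ring

lemma polarCoord_symm_eq_circleMap (p : ℝ × ℝ) :
    Complex.polarCoord.symm p = circleMap 0 p.1 p.2 := by
  simp [Complex.polarCoord_symm_apply, circleMap, Complex.exp_mul_I, ← Complex.ofReal_cos,
    ← Complex.ofReal_sin]

theorem setIntegral_annulus_eq_intervalIntegral_circleAverage {f : ℂ → E} {a b : ℝ} (ha : 0 < a)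
    (hab : a ≤ b) (hf : ContinuousOn f (closedBall 0 b)) :
    ∫ z in {z : ℂ | ‖z‖ ∈ Icc a b}, f z = ∫ s in a..b, (2 * π * s) • circleAverage f 0 s := by
  set F : ℝ × ℝ → E := fun p ↦ p.1 • f (circleMap 0 p.1 p.2)
  have hsub : Icc a b ×ˢ Ioo (-π) π ⊆ polarCoord.target := fun p hp ↦
    ⟨ha.trans_le hp.1.1, hp.2⟩
  have hpolar : ∫ z in {z : ℂ | ‖z‖ ∈ Icc a b}, f z = ∫ p in Icc a b ×ˢ Ioo (-π) π, F p := by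
    have hA : MeasurableSet {z : ℂ | ‖z‖ ∈ Icc a b} := measurable_norm measurableSet_Icc
    rw [← integral_indicator hA,
      ← Complex.integral_comp_polarCoord_symm, ← inter_eq_right.mpr hsub,
      ← setIntegral_indicator (measurableSet_Icc.prod measurableSet_Ioo)]
    refine setIntegral_congr_fun polarCoord.open_target.measurableSet fun p hp ↦ ?_
    have hp₁ : 0 < p.1 := hp.1
    have hmem : p ∈ Icc a b ×ˢ Ioo (-π) π ↔
        Complex.polarCoord.symm p ∈ {z : ℂ | ‖z‖ ∈ Icc a b} := by
      simp [abs_of_pos hp₁, hp.2]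
    by_cases h : p ∈ Icc a b ×ˢ Ioo (-π) π
    · rw [indicator_of_mem (hmem.mp h), indicator_of_mem h, polarCoord_symm_eq_circleMap]
    · rw [indicator_of_notMem (mt hmem.mpr h), indicator_of_notMem h, smul_zero]
  have hFint : IntegrableOn F (Icc a b ×ˢ Ioo (-π) π) := by
    refine ContinuousOn.integrableOn_compact (isCompact_Icc.prod isCompact_Icc) ?_
      |>.mono_set (prod_mono subset_rfl Ioo_subset_Icc_self)
    refine continuous_fst.continuousOn.smul (hf.comp circleMap.continuous.continuousOn ?_)
    intro p hp
    rw [mem_closedBall, dist_zero_right, norm_circleMap_zero, abs_of_nonneg (ha.le.trans hp.1.1)]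
    exact hp.1.2
  rw [hpolar, Measure.volume_eq_prod, setIntegral_prod F hFint, intervalIntegral.integral_of_le hab,
    ← integral_Icc_eq_integral_Ioc]
  refine integral_congr_ae (ae_of_all _ fun s ↦ ?_)
  simp only [F]
  rw [integral_smul, integral_Ioo_circleMap_eq_circleAverage, smul_smul, mul_comm s]

theorem mul_le_setIntegral_annulus_of_le_circleAverage {f : ℂ → ℝ} {a b C : ℝ} (ha : 0 < a)
    (hab : a ≤ b) (hf : ContinuousOn f (closedBall 0 b))
    (hC : ∀ s ∈ Icc a b, C ≤ circleAverage f 0 s) :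
    π * (b ^ 2 - a ^ 2) * C ≤ ∫ z in {z : ℂ | ‖z‖ ∈ Icc a b}, f z := by
  have havg : ContinuousOn (circleAverage f 0) (Icc a b) :=
    (hf.mono fun z hz ↦ by simpa using hz.2).circleAverage fun s hs ↦ ha.le.trans hs.1
  rw [setIntegral_annulus_eq_intervalIntegral_circleAverage ha hab hf]
  calc π * (b ^ 2 - a ^ 2) * C = ∫ s in a..b, 2 * π * s * C := by
        rw [intervalIntegral.integral_mul_const, intervalIntegral.integral_const_mul, integral_id]
        ring
    _ ≤ ∫ s in a..b, (2 * π * s) • circleAverage f 0 s := by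
        refine intervalIntegral.integral_mono_on hab ?_ ?_ fun s hs ↦ ?_
        · exact (continuous_const.mul continuous_id).mul continuous_const |>.intervalIntegrable _ _
        · exact (continuousOn_const.mul continuousOn_id).smul havg |>.intervalIntegrable_of_Icc hab
        · have : 0 ≤ s := ha.le.trans hs.1
          rw [smul_eq_mul]
          gcongr
          exact hC s hs

theorem mul_le_setIntegral_closedBall_of_le_circleAverage {f : ℂ → ℝ} {a b R C : ℝ} (ha : 0 < a)
    (hab : a ≤ b) (hbR : b ≤ R) (hf : ContinuousOn f (closedBall 0 b))
    (hf₀ : ∀ z ∈ closedBall 0 R, 0 ≤ f z) (hfi : IntegrableOn f (closedBall 0 R))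
    (hC : ∀ s ∈ Icc a b, C ≤ circleAverage f 0 s) :
    π * (b ^ 2 - a ^ 2) * C ≤ ∫ z in closedBall 0 R, f z := by
  refine (mul_le_setIntegral_annulus_of_le_circleAverage ha hab hf hC).trans ?_
  refine setIntegral_mono_set hfi
    ((ae_restrict_iff' measurableSet_closedBall).mpr (ae_of_all _ hf₀))
    (LE.le.eventuallyLE fun z (hz : ‖z‖ ∈ Icc a b) ↦ ?_)
  exact mem_closedBall_zero_iff.mpr (hz.2.trans hbR)

end Annulus

lemma ball_ae_eq_closedBall {E : Type*} [NormedAddCommGroup E] [NormedSpace ℝ E] [Nontrivial E]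
    [MeasurableSpace E] [BorelSpace E] [FiniteDimensional ℝ E] (μ : Measure E)
    [μ.IsAddHaarMeasure] (x : E) (r : ℝ) : ball x r =ᵐ[μ] closedBall x r := by
  refine ae_eq_set.mpr ⟨?_, ?_⟩
  · rw [sdiff_eq_empty.mpr ball_subset_closedBall, measure_empty]
  · rw [closedBall_sdiff_ball, Measure.addHaar_sphere]

lemma integrableOn_closedBall_of_bounded {E F : Type*} [NormedAddCommGroup E] [NormedSpace ℝ E]
    [Nontrivial E] [MeasurableSpace E] [BorelSpace E] [FiniteDimensional ℝ E] [NormedAddCommGroup F]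
    {μ : Measure E} [μ.IsAddHaarMeasure] {f : E → F} {x : E} {r M : ℝ}
    (hf : ContinuousOn f (ball x r)) (hM : ∀ z ∈ ball x r, ‖f z‖ ≤ M) :
    IntegrableOn f (closedBall x r) μ := by
  rw [IntegrableOn, ← Measure.restrict_congr_set (ball_ae_eq_closedBall μ x r)]
  exact IntegrableOn.of_bound measure_ball_lt_top (hf.aestronglyMeasurable measurableSet_ball) M
    (ae_restrict_of_forall_mem measurableSet_ball hM)

lemma four_mul_div_half_pow_rpow {r : ℝ} (hr : 0 < r) (k : ℕ) (q : ℝ) :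
    (4 * r / (r / 2) ^ k) ^ q = (2 ^ (k + 2)) ^ q * r ^ ((1 - k) * q) := by
  have h : 4 * r / (r / 2) ^ k = 2 ^ (k + 2) * r ^ (1 - k : ℝ) := by
    rw [rpow_sub hr, rpow_one, rpow_natCast, div_pow]
    field_simp
    ring
  rw [h, mul_rpow (by positivity) (by positivity), rpow_mul hr.le]

theorem norm_divDiff_rpow_le_circleAverage_of_mem_Icc {G : ℂ → ℂ} {L : List ℂ} {r s q : ℝ}
    (hq : 1 ≤ q) (hr : 0 < r) (hG : DifferentiableOn ℂ G (ball 0 (4 * r))) (hL : L.Nodup)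
    (hL3 : ∀ w ∈ L, ‖w‖ ≤ 3 * r) (hs : s ∈ Icc (7 * r / 2) (15 * r / 4)) :
    ‖divDiff G L‖ ^ q ≤
      (2 ^ (L.length + 2)) ^ q * r ^ ((1 - L.length) * q) *
        circleAverage (fun z ↦ ‖G z‖ ^ q) 0 s := by
  obtain ⟨hs₁, hs₂⟩ := hs
  have hδ : r / 2 ≤ s - 3 * r := by linarith
  have hG' : DiffContOnCl ℂ G (ball 0 s) :=
    hG.diffContOnCl_ball (closedBall_subset_ball (by linarith))
  have hLs : ∀ w ∈ L, w ∈ closedBall 0 (s - (s - 3 * r)) := by simpa using hL3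
  refine (norm_divDiff_rpow_le_circleAverage hq (by linarith) (by linarith) hG' hL hLs).trans ?_
  rw [← four_mul_div_half_pow_rpow hr]
  gcongr
  · exact circleAverage_nonneg_of_nonneg fun _ _ ↦ by positivity
  · exact div_nonneg (by linarith) (pow_nonneg (by linarith) _)
  · linarith

theorem stmt3_general (k : ℕ) (q : ℝ) (hq : 1 ≤ q) :
    ∃ C > (0 : ℝ), ∀ r : ℝ, 0 < r → ∀ G : ℂ → ℂ,
      DifferentiableOn ℂ G (Metric.ball (0 : ℂ) (4 * r)) →
      (∃ M, ∀ z ∈ Metric.ball (0 : ℂ) (4 * r), ‖G z‖ ≤ M) →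
      ∀ lam : Fin k → ℂ, Function.Injective lam →
      (∀ i, ‖lam i‖ ≤ 3 * r) →
      ‖divDiff G (List.ofFn lam)‖ ^ q ≤
        C * r ^ ((1 - (k : ℝ)) * q - 2) *
          ∫ z in Metric.closedBall (0 : ℂ) (4 * r), ‖G z‖ ^ q := by
  -- `29 π r² / 16` is the area of the annulus `7r/2 ≤ |z| ≤ 15r/4`.
  refine ⟨16 / (29 * π) * (2 ^ (k + 2)) ^ q, by positivity, ?_⟩
  rintro r hr G hG ⟨M, hM⟩ lam hlam hlam3
  set X := ‖divDiff G (List.ofFn lam)‖ ^ q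
  set A : ℝ := (2 ^ (k + 2)) ^ q * r ^ ((1 - k) * q)
  have hA : 0 < A := by positivity
  have hL3 : ∀ w ∈ List.ofFn lam, ‖w‖ ≤ 3 * r := by simpa [List.mem_ofFn] using hlam3
  have hGq : ContinuousOn (fun z ↦ ‖G z‖ ^ q) (ball 0 (4 * r)) :=
    hG.continuousOn.norm.rpow_const fun _ _ ↦ Or.inr (by linarith)
  have hint : IntegrableOn (fun z ↦ ‖G z‖ ^ q) (closedBall 0 (4 * r)) :=
    integrableOn_closedBall_of_bounded hGq fun z hz ↦ by
      rw [norm_of_nonneg (by positivity)]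
      exact rpow_le_rpow (norm_nonneg _) (hM z hz) (by linarith)
  have hdisc := mul_le_setIntegral_closedBall_of_le_circleAverage
    (a := 7 * r / 2) (b := 15 * r / 4) (C := X / A) (by positivity) (by linarith) (by linarith)
    (hGq.mono (closedBall_subset_ball (by linarith))) (fun _ _ ↦ by positivity) hint fun s hs ↦ by
      rw [div_le_iff₀ hA, mul_comm]
      simpa using norm_divDiff_rpow_le_circleAverage_of_mem_Icc hq hr hG
        (List.nodup_ofFn.mpr hlam) hL3 hs
  calc X = 16 / (29 * π * r ^ 2) * A * (π * ((15 * r / 4) ^ 2 - (7 * r / 2) ^ 2) * (X / A)) := by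
        field_simp
        ring
    _ ≤ 16 / (29 * π * r ^ 2) * A * ∫ z in closedBall (0 : ℂ) (4 * r), ‖G z‖ ^ q :=
        mul_le_mul_of_nonneg_left hdisc (by positivity)
    _ = _ := by
        rw [rpow_sub hr, rpow_two]
        field_simp
        ring

/-- L^q bound on divided differences of a bounded holomorphic function. -/
theorem stmt3 (k : ℕ) (hk : 0 < k) (q : ℝ) (hq : 1 ≤ q) :
    ∃ C > (0 : ℝ), ∀ r : ℝ, 0 < r → ∀ G : ℂ → ℂ,
      DifferentiableOn ℂ G (Metric.ball (0 : ℂ) (4 * r)) →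
      (∃ M, ∀ z ∈ Metric.ball (0 : ℂ) (4 * r), ‖G z‖ ≤ M) →
      ∀ lam : Fin k → ℂ, Function.Injective lam →
      (∀ i, ‖lam i‖ ≤ 3 * r) →
      ‖divDiff G (List.ofFn lam)‖ ^ q ≤
        C * r ^ ((1 - (k : ℝ)) * q - 2) *
          ∫ z in Metric.closedBall (0 : ℂ) (4 * r), ‖G z‖ ^ q :=
  stmt3_general k q hq
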